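/- Let B = {B_j}_{j=1}^s be a partition of H, C = {C_k}_{k=1}^t a partition of N, c* = max_k |C_k|. Then V(B) × W(C) × Ω is regular if and only if gcd( gcd(|B_1|,...,|B_s|), lcm(2, c*!) ) = 1. -/

import Mathlib

/-- A preference profile: each individual `i : Fin h` has a linear order on the `n`
alternatives, identified with the permutation of `Fin n` mapping ranks to alternatives. -/
abbrev Profile (h n : Nat) := Fin h → Equiv.Perm (Fin n)

/-- The order-reversing permutation `ρ₀`. -/
def rho0 (n : Nat) : Equiv.Perm (Fin n) := Fin.revPerm

/-- The subgroup `Ω = {id, ρ₀}` of `S_n` (generated by `ρ₀`, which has order 2). -/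
def Omega (n : Nat) : Subgroup (Equiv.Perm (Fin n)) := Subgroup.zpowers (rho0 n)

/-- `ρ₀` as an element of `Ω`. -/
def omegaRho0 (n : Nat) : Omega n := ⟨rho0 n, Subgroup.mem_zpowers _⟩

/-- The group `G = S_h × S_n × Ω`. -/
abbrev GG (h n : Nat) := Equiv.Perm (Fin h) × Equiv.Perm (Fin n) × (Omega n)

/-- The action of `(φ, ψ, ρ) ∈ G` on a profile: `(p^{(φ,ψ,ρ)})_i = ψ p_{φ⁻¹(i)} ρ`. -/
def act {h n : Nat} (g : GG h n) (p : Profile h n) : Profile h n :=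
  fun i => g.2.1 * p (g.1⁻¹ i) * (g.2.2 : Equiv.Perm (Fin n))

/-- A rule `F` is `U`-symmetric if `F(p^{(φ,ψ,ρ)}) = ψ F(p) ρ` for all `p` and `(φ,ψ,ρ) ∈ U`. -/
def USymm {h n : Nat} (U : Set (GG h n)) (F : Profile h n → Equiv.Perm (Fin n)) : Prop :=
  ∀ p : Profile h n, ∀ g ∈ U, F (act g p) = g.2.1 * F p * (g.2.2 : Equiv.Perm (Fin n))

/-- `S₁^U(p) = { q : ψ q ρ = q for all (φ,ψ,ρ) in the stabilizer of p in U }`. -/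
def S1set {h n : Nat} (U : Set (GG h n)) (p : Profile h n) : Set (Equiv.Perm (Fin n)) :=
  {q | ∀ g ∈ U, act g p = p → g.2.1 * q * (g.2.2 : Equiv.Perm (Fin n)) = q}

/-- Regularity of `U`: for every profile `p` there is `ψ*` conjugate to `ρ₀` with
`Stab_U(p) ⊆ (S_h × {id} × {id}) ∪ (S_h × {ψ*} × {ρ₀})`. -/
def Regular {h n : Nat} (U : Set (GG h n)) : Prop :=
  ∀ p : Profile h n, ∃ ψs : Equiv.Perm (Fin n), IsConj (rho0 n) ψs ∧
    ∀ g ∈ U, act g p = p →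
      (g.2.1 = 1 ∧ (g.2.2 : Equiv.Perm (Fin n)) = 1) ∨
      (g.2.1 = ψs ∧ (g.2.2 : Equiv.Perm (Fin n)) = rho0 n)

/-- Number of individuals strictly preferring `x` to `y` in profile `p`
(smaller rank = better, since permutations send ranks to alternatives). -/
def prefCount {h n : Nat} (p : Profile h n) (x y : Fin n) : Nat :=
  (Finset.univ.filter fun i => (p i)⁻¹ x < (p i)⁻¹ y).card

/-- `C_ν(p)`: linear orders consistent with the `ν`-majority principle applied to `p`. -/
def Cset {h n : Nat} (p : Profile h n) (ν : Nat) : Set (Equiv.Perm (Fin n)) :=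
  {q | ∀ x y : Fin n, ν ≤ prefCount p x y → q⁻¹ x < q⁻¹ y}

/-- `ν(p)`: the minimal majority threshold `ν ∈ ℕ ∩ (h/2, h]` with `C_ν(p) ≠ ∅`. -/
noncomputable def nuMin {h n : Nat} (p : Profile h n) : Nat :=
  sInf {ν : Nat | h < 2 * ν ∧ ν ≤ h ∧ (Cset p ν).Nonempty}

/-- minimal majority rule. -/
def MinMaj {h n : Nat} (F : Profile h n → Equiv.Perm (Fin n)) : Prop :=
  ∀ p : Profile h n, F p ∈ Cset p (nuMin p)

/-- `gcd(T(φ))`: the gcd of the lengths of the orbits (cycles) of `φ`. -/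
noncomputable def gcdOrbits {h : Nat} (phi : Equiv.Perm (Fin h)) : Nat :=
  Finset.univ.gcd fun i => Function.minimalPeriod (⇑phi) i

/-!
If a prime `q` divides both the gcd `d` of the block sizes of `B` and `lcm(2, c*!)`, cut every
block of `B` into `q`-cycles of a permutation `φ` and colour the individuals by `ZMod q` so that
`φ` raises colours by one. Giving each individual the order `u ^ colour`, for `u` of order `q`,
produces a profile fixed by `(φ, id, ρ₀)` when `q = 2` (take `u = ρ₀`) and by `(φ, u, id)` when
`q ∣ c*!` (take for `u` an element of order `q`, by Cauchy, permuting a block of `C` of size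
at least `q`);
either contradicts regularity.

Conversely, if `(φ, ψ, ρ)` fixes `p`, then `ψ ^ k * p i * ρ ^ k = p i` for the length `k` of the
cycle of `φ` through `i`. For `ρ = id` the order of `ψ` thus divides every cycle length of `φ`,
hence `d`, and also `c*!` because `ψ` preserves the blocks of `C`; so `ψ = id`. For `ρ = ρ₀` the
square of `(φ, ψ, ρ₀)` gives `ψ ^ 2 = id`, and a cycle of `φ` of odd length (one exists since `d`
is odd) gives `ψ * p i * ρ₀ = p i`, so `ψ` is conjugate to `ρ₀`. As the stabiliser is a group,
these two facts amount to regularity.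
-/


open Finset Function Equiv
open scoped Pointwise

section Permutations

variable {α : Type*}

theorem Equiv.Perm.minimalPeriod_subtypePerm (σ : Perm α) {P : α → Prop}
    (hP : ∀ x, P (σ x) ↔ P x) (x : Subtype P) :
    minimalPeriod (σ.subtypePerm hP) x = minimalPeriod σ x :=
  minimalPeriod_eq_minimalPeriod_iff.2 fun k => by
    simp only [IsPeriodicPt, IsFixedPt, Perm.iterate_eq_pow, Perm.subtypePerm_pow,
      Perm.subtypePerm_apply, Subtype.ext_iff]

theorem Equiv.Perm.dvd_card_of_dvd_minimalPeriod [Fintype α] (σ : Perm α) {m : ℕ}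
    (h : ∀ x, m ∣ minimalPeriod σ x) : m ∣ Fintype.card α := by
  classical
  rw [Fintype.card_congr (MulAction.selfEquivSigmaOrbits (Subgroup.zpowers σ) α),
    Fintype.card_sigma]
  refine Finset.dvd_sum fun ω _ => ?_
  rw [← MulAction.minimalPeriod_eq_card]
  exact h _

variable [DecidableEq α] {σ : Perm α} {S : Finset α}

theorem Equiv.Perm.apply_mem_iff_mem_of_image_eq (hS : S.image σ = S) (x : α) :
    σ x ∈ S ↔ x ∈ S := by
  conv_lhs => rw [← hS]
  exact σ.injective.mem_finset_image

theorem Equiv.Perm.image_eq_of_mapsTo (h : ∀ x ∈ S, σ x ∈ S) : S.image σ = S :=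
  eq_of_subset_of_card_le (image_subset_iff.2 h) (card_image_of_injective _ σ.injective).ge

theorem Equiv.Perm.dvd_card_of_image_eq {m : ℕ} (hS : S.image σ = S)
    (h : ∀ x ∈ S, m ∣ minimalPeriod σ x) : m ∣ #S := by
  rw [← Fintype.card_coe S]
  refine (σ.subtypePerm (σ.apply_mem_iff_mem_of_image_eq hS)).dvd_card_of_dvd_minimalPeriod
    fun x => ?_
  rw [Perm.minimalPeriod_subtypePerm]
  exact h x x.2

theorem Equiv.Perm.minimalPeriod_le_card_of_image_eq (hS : S.image σ = S) {x : α} (hx : x ∈ S) :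
    minimalPeriod σ x ≤ #S := by
  rw [← Fintype.card_coe S, ← Perm.minimalPeriod_subtypePerm σ (σ.apply_mem_iff_mem_of_image_eq hS)
    ⟨x, hx⟩]
  exact minimalPeriod_le_card

end Permutations

theorem pow_val_add_one {M : Type*} [Monoid M] {q : ℕ} [NeZero q] {u : M} (hu : u ^ q = 1)
    (a : ZMod q) : u ^ (a + 1).val = u ^ a.val * u := by
  have pow_mod : ∀ k, u ^ (k % q) = u ^ k := fun k => by
    conv_rhs => rw [← Nat.mod_add_div k q, pow_add, pow_mul, hu, one_pow, mul_one]
  rw [ZMod.val_add, pow_mod, pow_add, ZMod.val_one_eq_one_mod, pow_mod, pow_one]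

theorem pow_val_comp_inv_mul {α M : Type*} [Monoid M] {q : ℕ} [NeZero q] {u : M}
    (hu : u ^ q = 1) {φ : Perm α} {c : α → ZMod q} (hc : ∀ x, c (φ x) = c x + 1) (i : α) :
    u ^ (c (φ⁻¹ i)).val * u = u ^ (c i).val := by
  rw [← pow_val_add_one hu, ← hc]
  exact congrArg (fun x => u ^ (c x).val) (φ.apply_symm_apply i)

theorem exists_perm_fiberwise_zmod_succ {α ι : Type*} [Fintype α] [DecidableEq ι] (f : α → ι)
    (q : ℕ) [NeZero q] (hq : ∀ j, q ∣ Fintype.card {x // f x = j}) :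
    ∃ φ : Perm α, ∃ c : α → ZMod q, (∀ x, f (φ x) = f x) ∧ ∀ x, c (φ x) = c x + 1 := by
  have e : ∀ j, {x // f x = j} ≃ Fin (Fintype.card {x // f x = j} / q) × ZMod q := fun j =>
    Fintype.equivOfCardEq (by simp [ZMod.card, Nat.div_mul_cancel (hq j)])
  let E := (Equiv.sigmaFiberEquiv f).symm.trans (Equiv.sigmaCongrRight e)
  let shift : Perm (Σ j, Fin (Fintype.card {x // f x = j} / q) × ZMod q) :=
    Equiv.sigmaCongrRight fun _ => Equiv.prodCongr (Equiv.refl _) (Equiv.addRight 1)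
  refine ⟨E.symm.permCongr shift, fun x => (E x).2.2, fun x => ?_, fun x => ?_⟩
  · exact ((e _).symm _).2
  · simp only [Equiv.permCongr_apply, Equiv.symm_symm]
    exact congrArg (fun y => y.2.2) (E.apply_symm_apply (shift (E x)))

section Blocks

variable {α ι : Type*}

theorem exists_eq_iff_mem_of_pairwise_disjoint {B : ι → Finset α} (hdisj : Pairwise (Disjoint on B))
    (hcov : ∀ x, ∃ j, x ∈ B j) : ∃ f : α → ι, ∀ x j, f x = j ↔ x ∈ B j := by
  choose f hf using hcov
  refine ⟨f, fun x j => ⟨fun hj => hj ▸ hf x, fun hx => ?_⟩⟩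
  by_contra hne
  exact disjoint_left.1 (hdisj hne) (hf x) hx

variable [DecidableEq α]

def blockStabilizer (B : ι → Finset α) : Subgroup (Perm α) :=
  ⨅ j, MulAction.stabilizer (Perm α) (B j)

variable {B : ι → Finset α}

theorem mem_blockStabilizer {σ : Perm α} : σ ∈ blockStabilizer B ↔ ∀ j, (B j).image σ = B j := by
  simp only [blockStabilizer, Subgroup.mem_iInf, MulAction.mem_stabilizer_iff]
  rfl

theorem exists_mem_blockStabilizer_zmod_succ [Fintype α] (hdisj : Pairwise (Disjoint on B))
    (hcov : ∀ x, ∃ j, x ∈ B j) (q : ℕ) [NeZero q] (hq : ∀ j, q ∣ #(B j)) :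
    ∃ φ ∈ blockStabilizer B, ∃ c : α → ZMod q, ∀ x, c (φ x) = c x + 1 := by
  classical
  obtain ⟨f, hf⟩ := exists_eq_iff_mem_of_pairwise_disjoint hdisj hcov
  have hfiber : ∀ j, Fintype.card {x // f x = j} = #(B j) := fun j => by
    rw [Fintype.card_subtype]
    congr 1
    ext x
    simp [hf]
  obtain ⟨φ, c, hφ, hc⟩ := exists_perm_fiberwise_zmod_succ f q fun j => hfiber j ▸ hq j
  refine ⟨φ, mem_blockStabilizer.2 fun j => φ.image_eq_of_mapsTo fun x hx => ?_, c, hc⟩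
  rw [← hf] at hx ⊢
  rw [hφ, hx]

theorem exists_mem_blockStabilizer_orderOf_eq [Fintype ι] (hdisj : Pairwise (Disjoint on B))
    {q : ℕ} (hq : q.Prime) (hqB : q ∣ (univ.sup fun j => #(B j)).factorial) :
    ∃ ψ ∈ blockStabilizer B, orderOf ψ = q := by
  obtain ⟨j, -, hj⟩ := (Finset.le_sup_iff hq.pos).1 (hq.dvd_factorial.1 hqB)
  have : Fact q.Prime := ⟨hq⟩
  obtain ⟨τ, hτ⟩ := exists_prime_orderOf_dvd_card (G := Perm (B j)) q
    (by rw [Fintype.card_perm, Fintype.card_coe]; exact Nat.dvd_factorial hq.pos hj)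
  refine ⟨Perm.ofSubtype τ, mem_blockStabilizer.2 fun j' => Perm.image_eq_of_mapsTo
    fun x hx => ?_, by rw [orderOf_injective _ Perm.ofSubtype_injective, hτ]⟩
  by_cases hxj : x ∈ B j
  · obtain rfl : j' = j := by
      by_contra hne
      exact disjoint_left.1 (hdisj hne) hx hxj
    rw [Perm.ofSubtype_apply_of_mem τ hxj]
    exact (τ _).2
  · rwa [Perm.ofSubtype_apply_of_not_mem τ hxj]

end Blocks

section Profiles

variable {h n : ℕ}

theorem rho0_mul_self (n : ℕ) : rho0 n * rho0 n = 1 := by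
  ext x
  simp [rho0]

theorem rho0_ne_one (hn : 2 ≤ n) : rho0 n ≠ 1 := fun h1 => by
  have := congrArg Fin.val (Equiv.ext_iff.1 h1 ⟨0, by omega⟩)
  simp [rho0] at this
  omega

theorem coe_omega_eq_one_or_eq_rho0 (u : Omega n) :
    (u : Perm (Fin n)) = 1 ∨ (u : Perm (Fin n)) = rho0 n := by
  obtain ⟨k, hk⟩ := Subgroup.mem_zpowers_iff.1 u.2
  rw [← hk]
  rcases Int.even_or_odd' k with ⟨m, rfl | rfl⟩ <;>
    simp [zpow_add, zpow_mul, sq, rho0_mul_self]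

theorem act_one (p : Profile h n) : act 1 p = p := by
  funext i
  simp [act]

theorem act_mul (g g' : GG h n) (p : Profile h n) : act (g * g') p = act g (act g' p) := by
  funext i
  have hcomm : (g.2.2 : Perm (Fin n)) * g'.2.2 = g'.2.2 * g.2.2 := by
    rcases coe_omega_eq_one_or_eq_rho0 g.2.2 with h1 | h1 <;>
      rcases coe_omega_eq_one_or_eq_rho0 g'.2.2 with h2 | h2 <;> simp [h1, h2]
  simp only [act, Prod.fst_mul, Prod.snd_mul, Subgroup.coe_mul, mul_inv_rev, Perm.mul_apply,
    hcomm, mul_assoc]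

instance : MulAction (GG h n) (Profile h n) where
  smul := act
  one_smul := act_one
  mul_smul := act_mul

theorem smul_profile_apply (g : GG h n) (p : Profile h n) (i : Fin h) :
    (g • p) i = g.2.1 * p (g.1⁻¹ i) * (g.2.2 : Perm (Fin n)) :=
  rfl

theorem regular_iff (hn : 2 ≤ n) (U : Subgroup (GG h n)) :
    Regular (U : Set (GG h n)) ↔ ∀ p : Profile h n, ∀ g ∈ U, g • p = p →
      ((g.2.2 : Perm (Fin n)) = 1 → g.2.1 = 1) ∧
        ((g.2.2 : Perm (Fin n)) = rho0 n → IsConj (rho0 n) g.2.1) := by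
  constructor
  · intro hreg p g hg hgp
    obtain ⟨ψs, hconj, hstab⟩ := hreg p
    rcases hstab g hg hgp with ⟨hψ, hρ⟩ | ⟨hψ, hρ⟩
    · exact ⟨fun _ => hψ, fun hρ₀ => (rho0_ne_one hn (hρ₀.symm.trans hρ)).elim⟩
    · exact ⟨fun h1 => (rho0_ne_one hn (hρ.symm.trans h1)).elim, fun _ => hψ ▸ hconj⟩
  · intro H p
    by_cases h₀ : ∃ g₀ ∈ U, g₀ • p = p ∧ (g₀.2.2 : Perm (Fin n)) = rho0 n
    · obtain ⟨g₀, hg₀, hp₀, hρ₀⟩ := h₀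
      refine ⟨g₀.2.1, (H p g₀ hg₀ hp₀).2 hρ₀, fun g hg hgp => ?_⟩
      rcases coe_omega_eq_one_or_eq_rho0 g.2.2 with hρ | hρ
      · exact Or.inl ⟨(H p g hg hgp).1 hρ, hρ⟩
      · -- `g g₀⁻¹` fixes `p` and has trivial `Ω`-component, so `g` and `g₀` share their `S_n`-part
        refine Or.inr ⟨?_, hρ⟩
        have hp₀' : g₀⁻¹ • p = p := inv_smul_eq_iff.2 hp₀.symm
        have hquot := (H p (g * g₀⁻¹) (U.mul_mem hg (U.inv_mem hg₀))
          (by rw [mul_smul, hp₀']; exact hgp)).1 (by simp [hρ, hρ₀])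
        exact mul_inv_eq_one.1 hquot
    · refine ⟨rho0 n, IsConj.refl _, fun g hg hgp => Or.inl ?_⟩
      rcases coe_omega_eq_one_or_eq_rho0 g.2.2 with hρ | hρ
      · exact ⟨(H p g hg hgp).1 hρ, hρ⟩
      · exact (h₀ ⟨g, hg, hgp, hρ⟩).elim

theorem pow_minimalPeriod_mul_mul_pow {g : GG h n} {p : Profile h n} (hgp : g • p = p)
    (i : Fin h) : g.2.1 ^ minimalPeriod g.1 i * p i * (g.2.2 : Perm (Fin n)) ^ minimalPeriod g.1 i
      = p i := by
  set k := minimalPeriod g.1 i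
  have hk : (g.1 ^ k)⁻¹ i = i := Perm.inv_eq_iff_eq.2 (isPeriodicPt_minimalPeriod g.1 i).symm
  have hgk : g ^ k • p = p := MulAction.mem_stabilizer_iff.1
    ((MulAction.stabilizer _ p).pow_mem (MulAction.mem_stabilizer_iff.2 hgp) k)
  simpa [smul_profile_apply, hk] using congrFun hgk i

end Profiles

section Regularity

variable {h n : ℕ} {ι κ : Type*}

def blockGroup (B : ι → Finset (Fin h)) (C : κ → Finset (Fin n)) : Subgroup (GG h n) :=
  (blockStabilizer B).prod ((blockStabilizer C).prod ⊤)

variable {B : ι → Finset (Fin h)} {C : κ → Finset (Fin n)}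

theorem coe_blockGroup : (blockGroup B C : Set (GG h n)) =
    {g : GG h n | (∀ j, (B j).image ⇑g.1 = B j) ∧ ∀ k, (C k).image ⇑g.2.1 = C k} := by
  ext g
  simp [blockGroup, Subgroup.mem_prod, mem_blockStabilizer]

theorem not_regular_of_two_dvd (hn : 2 ≤ n) (hBdisj : Pairwise (Disjoint on B))
    (hBcov : ∀ i, ∃ j, i ∈ B j) (h2 : ∀ j, 2 ∣ #(B j)) :
    ¬ Regular (blockGroup B C : Set (GG h n)) := by
  intro hreg
  obtain ⟨φ, hφ, c, hc⟩ := exists_mem_blockStabilizer_zmod_succ hBdisj hBcov 2 h2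
  let p : Profile h n := fun i => rho0 n ^ (c i).val
  have hgp : ((φ, 1, omegaRho0 n) : GG h n) • p = p := funext fun i =>
    (one_mul _).trans (pow_val_comp_inv_mul (by rw [sq, rho0_mul_self]) hc i)
  have := ((regular_iff hn _).1 hreg p _ ⟨hφ, one_mem _, Subgroup.mem_top _⟩ hgp).2 rfl
  exact rho0_ne_one hn (isConj_one_left.1 this)

theorem not_regular_of_dvd_factorial [Fintype κ] (hn : 2 ≤ n) (hBdisj : Pairwise (Disjoint on B))
    (hBcov : ∀ i, ∃ j, i ∈ B j) (hCdisj : Pairwise (Disjoint on C)) {q : ℕ} (hq : q.Prime)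
    (hqB : ∀ j, q ∣ #(B j)) (hqC : q ∣ (univ.sup fun k => #(C k)).factorial) :
    ¬ Regular (blockGroup B C : Set (GG h n)) := by
  intro hreg
  have : NeZero q := ⟨hq.ne_zero⟩
  obtain ⟨φ, hφ, c, hc⟩ := exists_mem_blockStabilizer_zmod_succ hBdisj hBcov q hqB
  obtain ⟨ψ, hψ, hψq⟩ := exists_mem_blockStabilizer_orderOf_eq hCdisj hq hqC
  let p : Profile h n := fun i => ψ ^ (c i).val
  have hgp : ((φ, ψ, 1) : GG h n) • p = p := funext fun i =>
    (mul_one _).trans ((pow_mul_comm' _ _).symm.trans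
      (pow_val_comp_inv_mul (hψq ▸ pow_orderOf_eq_one ψ) hc i))
  have := ((regular_iff hn _).1 hreg p _ ⟨hφ, hψ, Subgroup.mem_top _⟩ hgp).1 rfl
  exact hq.one_lt.ne' (hψq ▸ orderOf_eq_one_iff.2 this)

variable [Fintype ι] [Fintype κ]

theorem pow_factorial_sup_card_eq_one (hcov : ∀ x, ∃ k, x ∈ C k) {ψ : Perm (Fin n)}
    (hψ : ψ ∈ blockStabilizer C) : ψ ^ (univ.sup fun k => #(C k)).factorial = 1 := by
  refine Equiv.ext fun x => ?_
  obtain ⟨k, hk⟩ := hcov x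
  have hper : minimalPeriod ψ x ≤ univ.sup fun k => #(C k) :=
    (ψ.minimalPeriod_le_card_of_image_eq (mem_blockStabilizer.1 hψ k) hk).trans
      (le_sup (f := fun k => #(C k)) (mem_univ k))
  exact isPeriodicPt_iff_minimalPeriod_dvd.2
    (Nat.dvd_factorial (minimalPeriod_pos_of_mem_periodicPts (ψ.injective.mem_periodicPts x)) hper)

section Coprime

variable (hcop : Nat.Coprime (univ.gcd fun j => #(B j))
    (Nat.lcm 2 (univ.sup fun k => #(C k)).factorial)) (hCcov : ∀ x, ∃ k, x ∈ C k)
include hcop hCcov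

theorem snd_eq_one_of_smul_eq {g : GG h n} {p : Profile h n} (hg : g ∈ blockGroup B C)
    (hgp : g • p = p) (hρ : (g.2.2 : Perm (Fin n)) = 1) : g.2.1 = 1 := by
  have hper : ∀ i, g.2.1 ^ minimalPeriod g.1 i = 1 := fun i => by
    simpa [hρ] using pow_minimalPeriod_mul_mul_pow hgp i
  have hB : orderOf g.2.1 ∣ univ.gcd fun j => #(B j) := Finset.dvd_gcd fun j _ =>
    g.1.dvd_card_of_image_eq (mem_blockStabilizer.1 hg.1 j) fun i _ =>
      orderOf_dvd_of_pow_eq_one (hper i)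
  have hC : orderOf g.2.1 ∣ Nat.lcm 2 (univ.sup fun k => #(C k)).factorial :=
    (orderOf_dvd_of_pow_eq_one (pow_factorial_sup_card_eq_one hCcov hg.2.1)).trans
      (Nat.dvd_lcm_right _ _)
  exact orderOf_eq_one_iff.1 (Nat.eq_one_of_dvd_coprimes hcop hB hC)

theorem isConj_rho0_of_smul_eq {g : GG h n} {p : Profile h n} (hg : g ∈ blockGroup B C)
    (hgp : g • p = p) (hρ : (g.2.2 : Perm (Fin n)) = rho0 n) : IsConj (rho0 n) g.2.1 := by
  have hsq : g.2.1 * g.2.1 = 1 := by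
    have := snd_eq_one_of_smul_eq hcop hCcov ((blockGroup B C).pow_mem hg 2)
      (by rw [sq, mul_smul, hgp, hgp]) (by simp [hρ, sq, rho0_mul_self])
    simpa [sq] using this
  obtain ⟨j, hj⟩ : ∃ j, ¬ 2 ∣ #(B j) := by
    by_contra! hall
    have := Nat.eq_one_of_dvd_coprimes hcop (Finset.dvd_gcd fun j _ => hall j)
      (Nat.dvd_lcm_left _ _)
    omega
  obtain ⟨i, -, hi⟩ : ∃ i ∈ B j, ¬ 2 ∣ minimalPeriod g.1 i := by
    by_contra! hall
    exact hj (g.1.dvd_card_of_image_eq (mem_blockStabilizer.1 hg.1 j) hall)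
  obtain ⟨m, hm⟩ : Odd (minimalPeriod g.1 i) := Nat.odd_iff.2 (by omega)
  have hfix := pow_minimalPeriod_mul_mul_pow hgp i
  rw [hm, hρ, pow_succ, pow_mul, sq, hsq, pow_succ, pow_mul, sq, rho0_mul_self, one_pow,
    one_mul, one_mul] at hfix
  refine isConj_iff.2 ⟨p i, ?_⟩
  calc p i * rho0 n * (p i)⁻¹ = g.2.1 * p i * (rho0 n * rho0 n) * (p i)⁻¹ := by
        nth_rw 1 [← hfix]; simp only [mul_assoc]
    _ = g.2.1 := by rw [rho0_mul_self, mul_one, mul_inv_cancel_right]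

end Coprime

end Regularity

theorem stmt14_general {h n : Nat} (hn : 2 ≤ n)
    (s t : Nat) (B : Fin s → Finset (Fin h)) (C : Fin t → Finset (Fin n))
    (hBdisj : ∀ j j', j ≠ j' → Disjoint (B j) (B j'))
    (hBcov : ∀ i : Fin h, ∃ j, i ∈ B j)
    (hCdisj : ∀ k k', k ≠ k' → Disjoint (C k) (C k'))
    (hCcov : ∀ x : Fin n, ∃ k, x ∈ C k) :
    Regular {g : GG h n | (∀ j, (B j).image ⇑g.1 = B j) ∧
        (∀ k, (C k).image ⇑g.2.1 = C k)} ↔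
      Nat.gcd (Finset.univ.gcd fun j => (B j).card)
        (Nat.lcm 2 (Finset.univ.sup fun k => (C k).card).factorial) = 1 := by
  rw [← coe_blockGroup]
  constructor
  · intro hreg
    by_contra hne
    set q := (Nat.gcd (univ.gcd fun j => #(B j))
      (Nat.lcm 2 (univ.sup fun k => #(C k)).factorial)).minFac
    have hq : q.Prime := Nat.minFac_prime hne
    have hqB : ∀ j, q ∣ #(B j) := fun j =>
      (Nat.minFac_dvd _).trans ((Nat.gcd_dvd_left _ _).trans (Finset.gcd_dvd (mem_univ j)))
    rcases hq.dvd_mul.1 ((Nat.minFac_dvd _).trans ((Nat.gcd_dvd_right _ _).trans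
      (Nat.lcm_dvd_mul _ _))) with hq2 | hqC
    · rw [(Nat.prime_dvd_prime_iff_eq hq Nat.prime_two).1 hq2] at hqB
      exact not_regular_of_two_dvd hn hBdisj hBcov hqB hreg
    · exact not_regular_of_dvd_factorial hn hBdisj hBcov hCdisj hq hqB hqC hreg
  · intro hcop
    exact (regular_iff hn _).2 fun p g hg hgp =>
      ⟨snd_eq_one_of_smul_eq hcop hCcov hg hgp, isConj_rho0_of_smul_eq hcop hCcov hg hgp⟩

theorem stmt14 {h n : Nat} (hh : 2 ≤ h) (hn : 2 ≤ n)
    (s t : Nat) (B : Fin s → Finset (Fin h)) (C : Fin t → Finset (Fin n))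
    (hBne : ∀ j, (B j).Nonempty)
    (hBdisj : ∀ j j', j ≠ j' → Disjoint (B j) (B j'))
    (hBcov : ∀ i : Fin h, ∃ j, i ∈ B j)
    (hCne : ∀ k, (C k).Nonempty)
    (hCdisj : ∀ k k', k ≠ k' → Disjoint (C k) (C k'))
    (hCcov : ∀ x : Fin n, ∃ k, x ∈ C k) :
    Regular {g : GG h n | (∀ j, (B j).image ⇑g.1 = B j) ∧
        (∀ k, (C k).image ⇑g.2.1 = C k)} ↔
      Nat.gcd (Finset.univ.gcd fun j => (B j).card)
        (Nat.lcm 2 (Finset.univ.sup fun k => (C k).card).factorial) = 1 :=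
  stmt14_general hn s t B C hBdisj hBcov hCdisj hCcov
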